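/- arXiv:0903.3857 — 3 statements merged into one kernel-verified Lean document; each statement's English description precedes it below -/
import Mathlib

section
/- For all real numbers s > r > 0 and δ ∈ (0,1), (1/(2π))∫₀^{2π} |s e^{iφ} − r|^{−δ} dφ ≤ 1/(s^δ (1−δ)). -/
open MeasureTheory Real

lemma aux1 (δ c a b : ℝ) (hδ0 : 0 < δ) (hδ1 : δ < 1) (hc : 0 < c) (hab : a ≤ b)
    (g : ℝ → ℝ) (hg : ContinuousOn g (Set.Icc a b))
    (hgpos : ∀ φ ∈ Set.Icc a b, 0 < g φ)
    (hlb : ∀ φ ∈ Set.Icc a b, c * (φ - a) ≤ g φ) :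
    ∫ φ in a..b, g φ ^ (-δ) ≤ c ^ (-δ) * ((b - a) ^ (1 - δ) / (1 - δ)) := by
  have hδ' : (-1 : ℝ) < -δ := by linarith
  have hL : IntervalIntegrable (fun φ => g φ ^ (-δ)) volume a b := by
    apply ContinuousOn.intervalIntegrable
    rw [Set.uIcc_of_le hab]
    exact hg.rpow_const (fun x hx => Or.inl (hgpos x hx).ne')
  have hR0 : IntervalIntegrable (fun φ : ℝ => (φ - a) ^ (-δ)) volume a b := by
    have := (intervalIntegral.intervalIntegrable_rpow' (a := 0) (b := b - a) hδ').comp_sub_right a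
    simpa using this
  have hR : IntervalIntegrable (fun φ => c ^ (-δ) * (φ - a) ^ (-δ)) volume a b :=
    hR0.const_mul _
  have hmono : (∫ φ in a..b, g φ ^ (-δ)) ≤ ∫ φ in a..b, c ^ (-δ) * (φ - a) ^ (-δ) := by
    apply intervalIntegral.integral_mono_ae_restrict hab hL hR
    have hane : ∀ᵐ x : ℝ ∂(volume.restrict (Set.Icc a b)), x ≠ a := by
      refine ae_restrict_of_ae ?_
      rw [ae_iff]
      simp only [ne_eq, not_not]
      have : {x : ℝ | x = a} = {a} := by ext x; simp
      rw [this]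
      exact measure_singleton a
    have hmem : ∀ᵐ x : ℝ ∂(volume.restrict (Set.Icc a b)), x ∈ Set.Icc a b :=
      ae_restrict_mem measurableSet_Icc
    filter_upwards [hane, hmem] with x hxa hx
    have hxgta : a < x := lt_of_le_of_ne hx.1 (Ne.symm hxa)
    have h1 : (0:ℝ) < c * (x - a) := by
      apply mul_pos hc; linarith
    have h2 : g x ^ (-δ) ≤ (c * (x - a)) ^ (-δ) :=
      Real.rpow_le_rpow_of_nonpos h1 (hlb x hx) (by linarith)
    calc g x ^ (-δ) ≤ (c * (x - a)) ^ (-δ) := h2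
      _ = c ^ (-δ) * (x - a) ^ (-δ) := Real.mul_rpow hc.le (by linarith)
  have hcomp : (∫ φ in a..b, (φ - a) ^ (-δ)) = (b - a) ^ (1 - δ) / (1 - δ) := by
    rw [intervalIntegral.integral_comp_sub_right (fun x => x ^ (-δ)) a]
    rw [integral_rpow (Or.inl hδ')]
    rw [sub_self]
    rw [Real.zero_rpow (by linarith : -δ + 1 ≠ 0)]
    norm_num
    rw [neg_add_eq_sub]
  calc (∫ φ in a..b, g φ ^ (-δ)) ≤ ∫ φ in a..b, c ^ (-δ) * (φ - a) ^ (-δ) := hmono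
    _ = c ^ (-δ) * ∫ φ in a..b, (φ - a) ^ (-δ) := intervalIntegral.integral_const_mul _ _
    _ = c ^ (-δ) * ((b - a) ^ (1 - δ) / (1 - δ)) := by rw [hcomp]

lemma aux2 (δ c a b : ℝ) (hδ0 : 0 < δ) (hδ1 : δ < 1) (hc : 0 < c) (hab : a ≤ b)
    (g : ℝ → ℝ) (hg : ContinuousOn g (Set.Icc a b))
    (hgpos : ∀ φ ∈ Set.Icc a b, 0 < g φ)
    (hlb : ∀ φ ∈ Set.Icc a b, c * (b - φ) ≤ g φ) :
    ∫ φ in a..b, g φ ^ (-δ) ≤ c ^ (-δ) * ((b - a) ^ (1 - δ) / (1 - δ)) := by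
  have hmap : ∀ x ∈ Set.Icc a b, a + b - x ∈ Set.Icc a b := by
    intro x hx
    constructor <;> [linarith [hx.2]; linarith [hx.1]]
  have key : (∫ φ in a..b, g φ ^ (-δ)) = ∫ φ in a..b, g (a + b - φ) ^ (-δ) := by
    rw [intervalIntegral.integral_comp_sub_left (fun x => g x ^ (-δ)) (a + b)]
    norm_num
  rw [key]
  have := aux1 δ c a b hδ0 hδ1 hc hab (fun x => g (a + b - x))
    (hg.comp (by fun_prop) hmap)
    (fun x hx => hgpos _ (hmap x hx))
    (fun x hx => by
      have := hlb (a + b - x) (hmap x hx)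
      have : c * (b - (a + b - x)) ≤ g (a + b - x) := this
      calc c * (x - a) = c * (b - (a + b - x)) := by ring_nf
        _ ≤ g (a + b - x) := this)
  exact this

theorem stmt_0 (s r δ : ℝ) (hr : 0 < r) (hrs : r < s) (hδ : δ ∈ Set.Ioo (0:ℝ) 1) :
    (1 / (2 * Real.pi)) *
        ∫ φ in (0:ℝ)..(2 * Real.pi),
          ‖(s : ℂ) * Complex.exp (φ * Complex.I) - (r : ℂ)‖ ^ (-δ)
      ≤ 1 / (s ^ δ * (1 - δ)) := by
  obtain ⟨hδ0, hδ1⟩ := hδ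
  have hs : 0 < s := hr.trans hrs
  set g : ℝ → ℝ := fun φ => ‖(s : ℂ) * Complex.exp (φ * Complex.I) - (r : ℂ)‖ with hgdef
  have hgcont : Continuous g := by fun_prop
  have hgpos : ∀ φ, 0 < g φ := by
    intro φ
    rw [norm_pos_iff]
    intro h
    have him : ((s : ℂ) * Complex.exp (φ * Complex.I) - (r : ℂ)).re = 0 ∧
        ((s : ℂ) * Complex.exp (φ * Complex.I) - (r : ℂ)).im = 0 := by
      rw [h]; simp
    have hre : s * Real.cos φ - r = 0 := by
      have := him.1
      simpa [Complex.exp_mul_I, Complex.sub_re, Complex.mul_re, Complex.cos_ofReal_re] using this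
    have himm : s * Real.sin φ = 0 := by
      have := him.2
      simpa [Complex.exp_mul_I, Complex.sub_im, Complex.mul_im, Complex.sin_ofReal_re] using this
    have hsin : Real.sin φ = 0 := by
      rcases mul_eq_zero.mp himm with h | h
      · linarith
      · exact h
    have hcos : Real.cos φ = r / s := by field_simp at hre ⊢; linarith
    have h1 : Real.cos φ ^ 2 + Real.sin φ ^ 2 = 1 := Real.cos_sq_add_sin_sq φ
    rw [hsin, hcos] at h1
    have : r ^ 2 = s ^ 2 := by field_simp at h1; nlinarith [h1]
    nlinarith
  have hgsin : ∀ φ, s * |Real.sin φ| ≤ g φ := by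
    intro φ
    have him : ((s : ℂ) * Complex.exp (φ * Complex.I) - (r : ℂ)).im = s * Real.sin φ := by
      simp [Complex.exp_mul_I, Complex.sub_im, Complex.mul_im,
        Complex.sin_ofReal_re, Complex.cos_ofReal_im]
    calc s * |Real.sin φ| = |s * Real.sin φ| := by
          rw [abs_mul, abs_of_pos hs]
      _ = |((s : ℂ) * Complex.exp (φ * Complex.I) - (r : ℂ)).im| := by rw [him]
      _ ≤ g φ := Complex.abs_im_le_norm _
  have hII : ∀ a b : ℝ, IntervalIntegrable (fun φ => g φ ^ (-δ)) volume a b := by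
    intro a b
    apply Continuous.intervalIntegrable
    exact hgcont.rpow_const (fun x => Or.inl (hgpos x).ne')
  have hpi : (0:ℝ) < π := Real.pi_pos
  set c : ℝ := s * (2 / π) with hcdef
  have hc : 0 < c := by positivity
  have hB := fun (a b : ℝ) => (c : ℝ) ^ (-δ) * ((b - a) ^ (1 - δ) / (1 - δ))
  -- quarter 1 : [0, π/2]
  have h1 : ∫ φ in (0:ℝ)..(π/2), g φ ^ (-δ) ≤ c ^ (-δ) * ((π/2) ^ (1 - δ) / (1 - δ)) := by
    have := aux1 δ c 0 (π/2) hδ0 hδ1 hc (by linarith) g hgcont.continuousOn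
      (fun x _ => hgpos x)
      (fun x hx => by
        have hsx : 2 / π * x ≤ Real.sin x := Real.mul_le_sin hx.1 hx.2
        have hsnn : 0 ≤ Real.sin x :=
          le_trans (mul_nonneg (by positivity) hx.1) hsx
        calc c * (x - 0) = s * (2 / π * x) := by ring
          _ ≤ s * Real.sin x := by nlinarith
          _ = s * |Real.sin x| := by rw [abs_of_nonneg hsnn]
          _ ≤ g x := hgsin x)
    simpa using this
  -- quarter 2 : [π/2, π]
  have h2 : ∫ φ in (π/2)..π, g φ ^ (-δ) ≤ c ^ (-δ) * ((π/2) ^ (1 - δ) / (1 - δ)) := by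
    have := aux2 δ c (π/2) π hδ0 hδ1 hc (by linarith) g hgcont.continuousOn
      (fun x _ => hgpos x)
      (fun x hx => by
        have h1' : 0 ≤ π - x := by linarith [hx.2]
        have h2' : π - x ≤ π / 2 := by linarith [hx.1]
        have hsx : 2 / π * (π - x) ≤ Real.sin (π - x) := Real.mul_le_sin h1' h2'
        rw [Real.sin_pi_sub] at hsx
        have hsnn : 0 ≤ Real.sin x := le_trans (by positivity) hsx
        calc c * (π - x) = s * (2 / π * (π - x)) := by ring
          _ ≤ s * Real.sin x := by nlinarith
          _ = s * |Real.sin x| := by rw [abs_of_nonneg hsnn]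
          _ ≤ g x := hgsin x)
    have heq : π - π/2 = π/2 := by ring
    rwa [heq] at this
  -- quarter 3 : [π, 3π/2]
  have h3 : ∫ φ in π..(3*π/2), g φ ^ (-δ) ≤ c ^ (-δ) * ((π/2) ^ (1 - δ) / (1 - δ)) := by
    have := aux1 δ c π (3*π/2) hδ0 hδ1 hc (by linarith) g hgcont.continuousOn
      (fun x _ => hgpos x)
      (fun x hx => by
        have h1' : 0 ≤ x - π := by linarith [hx.1]
        have h2' : x - π ≤ π / 2 := by linarith [hx.2]
        have hsx : 2 / π * (x - π) ≤ Real.sin (x - π) := Real.mul_le_sin h1' h2'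
        have hsin : Real.sin (x - π) = - Real.sin x := by
          rw [Real.sin_sub_pi]
        rw [hsin] at hsx
        have habs : -Real.sin x ≤ |Real.sin x| := by
          rw [← abs_neg]; exact le_abs_self _
        calc c * (x - π) = s * (2 / π * (x - π)) := by ring
          _ ≤ s * (-Real.sin x) := by nlinarith
          _ ≤ s * |Real.sin x| := by nlinarith
          _ ≤ g x := hgsin x)
    have heq : 3*π/2 - π = π/2 := by ring
    rwa [heq] at this
  -- quarter 4 : [3π/2, 2π]
  have h4 : ∫ φ in (3*π/2)..(2*π), g φ ^ (-δ) ≤ c ^ (-δ) * ((π/2) ^ (1 - δ) / (1 - δ)) := by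
    have := aux2 δ c (3*π/2) (2*π) hδ0 hδ1 hc (by linarith) g hgcont.continuousOn
      (fun x _ => hgpos x)
      (fun x hx => by
        have h1' : 0 ≤ 2*π - x := by linarith [hx.2]
        have h2' : 2*π - x ≤ π / 2 := by linarith [hx.1]
        have hsx : 2 / π * (2*π - x) ≤ Real.sin (2*π - x) := Real.mul_le_sin h1' h2'
        have hsin : Real.sin (2*π - x) = - Real.sin x := by
          rw [show 2*π - x = -(x - 2*π) by ring, Real.sin_neg, Real.sin_sub_two_pi]
        rw [hsin] at hsx
        calc c * (2*π - x) = s * (2 / π * (2*π - x)) := by ring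
          _ ≤ s * (-Real.sin x) := by nlinarith
          _ ≤ s * |Real.sin x| := by nlinarith [neg_le_abs (Real.sin x)]
          _ ≤ g x := hgsin x)
    have heq : 2*π - 3*π/2 = π/2 := by ring
    rwa [heq] at this
  -- combine
  have hsplit : (∫ φ in (0:ℝ)..(2*π), g φ ^ (-δ))
      = (∫ φ in (0:ℝ)..(π/2), g φ ^ (-δ)) + (∫ φ in (π/2)..π, g φ ^ (-δ))
        + (∫ φ in π..(3*π/2), g φ ^ (-δ)) + (∫ φ in (3*π/2)..(2*π), g φ ^ (-δ)) := by
    have e1 := intervalIntegral.integral_add_adjacent_intervals (hII 0 (π/2)) (hII (π/2) (2*π))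
    have e2 := intervalIntegral.integral_add_adjacent_intervals (hII (π/2) π) (hII π (2*π))
    have e3 := intervalIntegral.integral_add_adjacent_intervals (hII π (3*π/2)) (hII (3*π/2) (2*π))
    linarith [e1, e2, e3]
  have htot : (∫ φ in (0:ℝ)..(2*π), g φ ^ (-δ)) ≤ 4 * (c ^ (-δ) * ((π/2) ^ (1 - δ) / (1 - δ))) := by
    rw [hsplit]; linarith
  have hval : 4 * (c ^ (-δ) * ((π/2) ^ (1 - δ) / (1 - δ))) = 2 * π * (1 / (s ^ δ * (1 - δ))) := by
    have hc1 : c ^ (-δ) = s ^ (-δ) * (2/π) ^ (-δ) :=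
      Real.mul_rpow hs.le (by positivity)
    have hc2 : (2/π : ℝ) ^ (-δ) = (π/2) ^ δ := by
      rw [Real.rpow_neg (by positivity), ← Real.inv_rpow (by positivity), inv_div]
    have hc3 : (π/2 : ℝ) ^ δ * (π/2) ^ (1 - δ) = π/2 := by
      rw [← Real.rpow_add (by positivity)]
      norm_num
    have hc4 : s ^ (-δ) = (s ^ δ)⁻¹ := by
      rw [Real.rpow_neg hs.le]
    have hsδ : (0:ℝ) < s ^ δ := Real.rpow_pos_of_pos hs δ
    have h1δ : (0:ℝ) < 1 - δ := by linarith
    calc 4 * (c ^ (-δ) * ((π/2) ^ (1 - δ) / (1 - δ)))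
        = 4 * ((s ^ δ)⁻¹ * (π/2) ^ δ * ((π/2) ^ (1 - δ) / (1 - δ))) := by
          rw [hc1, hc2, hc4]
      _ = 4 * (s ^ δ)⁻¹ * ((π/2) ^ δ * (π/2) ^ (1 - δ)) / (1 - δ) := by ring
      _ = 4 * (s ^ δ)⁻¹ * (π/2) / (1 - δ) := by rw [hc3]
      _ = 2 * π * (1 / (s ^ δ * (1 - δ))) := by
          field_simp
          ring
  have h2pi : (0:ℝ) < 1 / (2*π) := by positivity
  calc (1 / (2 * π)) * ∫ φ in (0:ℝ)..(2*π), g φ ^ (-δ)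
      ≤ (1 / (2 * π)) * (2 * π * (1 / (s ^ δ * (1 - δ)))) := by
        apply mul_le_mul_of_nonneg_left _ h2pi.le
        rw [← hval]; exact htot
    _ = 1 / (s ^ δ * (1 - δ)) := by
        field_simp
end

section
/- For any complex numbers c and d, any r > 0 and any δ ∈ (0,1), one has (1/(2π)) ∫₀^{2π} log⁺|1 + c/(r e^{iφ} − d)| dφ ≤ 2π |c|^δ / (δ(1−δ) r^δ). -/
/-!
Since `log⁺ (1 + x) ≤ x ^ δ / δ`, the integrand is at most
`‖c‖ ^ δ / δ * ‖r e^{iφ} - d‖ ^ (-δ)`. The distance from `r e^{iφ}` to `d` is at least its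
distance `r |sin (φ - arg d)|` to the line through `0` and `d`, and Jordan's inequality
`sin v ≥ 2 / π * min v (π - v)` on `[0, π]` bounds `∫₀^{2π} |sin u| ^ (-δ)` by `4π / (1 - δ)`.
-/

open MeasureTheory Real

noncomputable def logPlus (x : ℝ) : ℝ := max (Real.log x) 0

open Set

theorem logPlus_eq_posLog : logPlus = log⁺ := funext fun _ => max_comm _ _

theorem logPlus_nonneg (x : ℝ) : 0 ≤ logPlus x := logPlus_eq_posLog ▸ posLog_nonneg

theorem posLog_one_add_le {x δ : ℝ} (hx : 0 ≤ x) (hδ0 : 0 < δ) (hδ1 : δ ≤ 1) :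
    log⁺ (1 + x) ≤ x ^ δ / δ := by
  have hx1 : 0 < 1 + x := by linarith
  rw [posLog_eq_log (by rw [abs_of_pos hx1]; linarith), le_div_iff₀ hδ0, mul_comm,
    ← log_rpow hx1]
  calc log ((1 + x) ^ δ) ≤ (1 + x) ^ δ - 1 := log_le_sub_one_of_pos (by positivity)
    _ ≤ x ^ δ := by linarith [one_rpow δ ▸ rpow_add_le_add_rpow zero_le_one hx hδ0.le hδ1]

theorem logPlus_norm_one_add_div_le {𝕜 : Type*} [NormedDivisionRing 𝕜] {δ m : ℝ}
    (hδ0 : 0 < δ) (hδ1 : δ ≤ 1) (c z : 𝕜) (hm : 0 < m) (hmz : m ≤ ‖z‖) :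
    logPlus ‖1 + c / z‖ ≤ ‖c‖ ^ δ / δ * m ^ (-δ) := by
  have hz : 0 < ‖z‖ := hm.trans_le hmz
  calc logPlus ‖1 + c / z‖ ≤ log⁺ (1 + ‖c / z‖) := by
        rw [logPlus_eq_posLog]
        exact posLog_le_posLog (norm_nonneg _) ((norm_add_le _ _).trans_eq (by rw [norm_one]))
    _ ≤ ‖c / z‖ ^ δ / δ := posLog_one_add_le (norm_nonneg _) hδ0 hδ1
    _ = ‖c‖ ^ δ / δ * ‖z‖ ^ (-δ) := by
        rw [norm_div, div_rpow (norm_nonneg _) hz.le, rpow_neg hz.le]; ring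
    _ ≤ ‖c‖ ^ δ / δ * m ^ (-δ) := by
        have hcδ : 0 ≤ ‖c‖ ^ δ / δ := by positivity
        exact mul_le_mul_of_nonneg_left (rpow_le_rpow_of_nonpos hm hmz (by linarith)) hcδ

theorem mul_abs_sin_sub_arg_le_norm_sub (d : ℂ) {r : ℝ} (hr : 0 ≤ r) (φ : ℝ) :
    r * |sin (φ - d.arg)| ≤ ‖(r : ℂ) * Complex.exp (φ * Complex.I) - d‖ := by
  have hrot : Complex.exp (-d.arg * Complex.I) * ((r : ℂ) * Complex.exp (φ * Complex.I) - d)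
      = (r : ℂ) * Complex.exp ((φ - d.arg : ℝ) * Complex.I) - ‖d‖ := by
    conv_lhs => arg 2; arg 2; rw [← Complex.norm_mul_exp_arg_mul_I d]
    rw [mul_sub, mul_left_comm, ← Complex.exp_add, mul_left_comm, ← Complex.exp_add,
      neg_mul, neg_add_cancel, Complex.exp_zero, mul_one]
    push_cast
    ring_nf
  calc r * |sin (φ - d.arg)|
      = |((r : ℂ) * Complex.exp ((φ - d.arg : ℝ) * Complex.I) - ‖d‖).im| := by
        simp only [Complex.sub_im, Complex.mul_im, Complex.ofReal_re, Complex.ofReal_im,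
          Complex.exp_ofReal_mul_I_re, Complex.exp_ofReal_mul_I_im, zero_mul, add_zero, sub_zero,
          abs_mul, abs_of_nonneg hr]
    _ ≤ ‖(r : ℂ) * Complex.exp ((φ - d.arg : ℝ) * Complex.I) - ‖d‖‖ :=
        Complex.abs_im_le_norm _
    _ = ‖(r : ℂ) * Complex.exp (φ * Complex.I) - d‖ := by
        rw [← hrot, norm_mul, ← Complex.ofReal_neg, Complex.norm_exp_ofReal_mul_I, one_mul]

theorem intervalIntegral.integral_mono_of_nonneg {μ : Measure ℝ} {f g : ℝ → ℝ} {a b : ℝ}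
    (hab : a ≤ b) (hf : 0 ≤ᵐ[μ] f) (hg : IntervalIntegrable g μ a b) (hfg : f ≤ᵐ[μ] g) :
    ∫ x in a..b, f x ∂μ ≤ ∫ x in a..b, g x ∂μ := by
  rw [intervalIntegral.integral_of_le hab, intervalIntegral.integral_of_le hab]
  exact MeasureTheory.integral_mono_of_nonneg (ae_restrict_of_ae hf) hg.1 (ae_restrict_of_ae hfg)

theorem ae_sin_sub_ne_zero (θ : ℝ) : ∀ᵐ φ : ℝ, sin (φ - θ) ≠ 0 := by
  refine measure_mono_null (fun φ hφ => ?_)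
    ((countable_range fun n : ℤ => θ + n * π).measure_zero volume)
  obtain ⟨n, hn⟩ := sin_eq_zero_iff.mp (not_not.mp hφ)
  exact ⟨n, by linarith⟩

theorem periodic_abs_sin_rpow (s : ℝ) : Function.Periodic (fun u => |sin u| ^ s) π := fun x => by
  simp only [sin_add_pi, abs_neg]

theorem sin_rpow_neg_le {δ v : ℝ} (hδ : 0 ≤ δ) (hv : v ∈ Ioo 0 π) :
    sin v ^ (-δ) ≤ (π / 2) ^ δ * (v ^ (-δ) + (π - v) ^ (-δ)) := by
  obtain ⟨hv0, hvπ⟩ := hv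
  have hmin : 0 < min v (π - v) := lt_min hv0 (by linarith)
  have hsin : 2 / π * min v (π - v) ≤ sin v := by
    have h2π : 0 ≤ 2 / π := by positivity
    rcases le_total v (π / 2) with h | h
    · exact (mul_le_mul_of_nonneg_left (min_le_left _ _) h2π).trans (mul_le_sin hv0.le h)
    · rw [← sin_pi_sub]
      exact (mul_le_mul_of_nonneg_left (min_le_right _ _) h2π).trans
        (mul_le_sin (by linarith) (by linarith))
  calc sin v ^ (-δ) ≤ (2 / π * min v (π - v)) ^ (-δ) :=
        rpow_le_rpow_of_nonpos (by positivity) hsin (by linarith)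
    _ = (π / 2) ^ δ * min v (π - v) ^ (-δ) := by
        rw [mul_rpow (by positivity) hmin.le, rpow_neg (by positivity),
          ← inv_rpow (by positivity), inv_div]
    _ ≤ (π / 2) ^ δ * (v ^ (-δ) + (π - v) ^ (-δ)) := by
        have hv' : 0 ≤ v ^ (-δ) := rpow_nonneg hv0.le _
        have hπv' : 0 ≤ (π - v) ^ (-δ) := rpow_nonneg (by linarith) _
        gcongr
        rcases min_cases v (π - v) with ⟨h, -⟩ | ⟨h, -⟩ <;> rw [h] <;> linarith

theorem intervalIntegrable_sub_rpow {s : ℝ} (hs : -1 < s) (c a b : ℝ) :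
    IntervalIntegrable (fun u => (c - u) ^ s) volume a b := by
  simpa using
    (intervalIntegral.intervalIntegrable_rpow' hs (a := c - a) (b := c - b)).comp_sub_left c

theorem intervalIntegrable_sin_rpow_neg_majorant {δ : ℝ} (hδ1 : δ < 1) :
    IntervalIntegrable (fun u => (π / 2) ^ δ * (u ^ (-δ) + (π - u) ^ (-δ))) volume 0 π :=
  ((intervalIntegral.intervalIntegrable_rpow' (by linarith)).add
    (intervalIntegrable_sub_rpow (by linarith) π 0 π)).const_mul _

theorem intervalIntegrable_abs_sin_rpow_neg {δ : ℝ} (hδ0 : 0 ≤ δ) (hδ1 : δ < 1) (a b : ℝ) :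
    IntervalIntegrable (fun u => |sin u| ^ (-δ)) volume a b := by
  refine (periodic_abs_sin_rpow (-δ)).intervalIntegrable₀ pi_ne_zero ?_ a b
  have hmajorant := intervalIntegrable_sin_rpow_neg_majorant hδ1
  rw [intervalIntegrable_iff_integrableOn_Ioo_of_le pi_pos.le] at hmajorant ⊢
  refine hmajorant.mono' (by fun_prop : Measurable fun u => |sin u| ^ (-δ)).aestronglyMeasurable
    (ae_restrict_of_forall_mem measurableSet_Ioo fun u hu => ?_)
  rw [norm_of_nonneg (by positivity), abs_of_pos (sin_pos_of_pos_of_lt_pi hu.1 hu.2)]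
  exact sin_rpow_neg_le hδ0 hu

theorem integral_abs_sin_rpow_neg_le {δ : ℝ} (hδ0 : 0 ≤ δ) (hδ1 : δ < 1) :
    ∫ u in 0..π, |sin u| ^ (-δ) ≤ 2 * π / (1 - δ) := by
  have hs : -1 < -δ := by linarith
  have hI : ∫ u in 0..π, u ^ (-δ) = π ^ (1 - δ) / (1 - δ) := by
    rw [integral_rpow (Or.inl hs), zero_rpow (by linarith), sub_zero, neg_add_eq_sub]
  have hI' : ∫ u in 0..π, (π - u) ^ (-δ) = π ^ (1 - δ) / (1 - δ) := by
    rw [intervalIntegral.integral_comp_sub_left (fun x => x ^ (-δ)), sub_self, sub_zero, hI]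
  have hπ2 : (π / 2) ^ δ * π ^ (1 - δ) ≤ π := by
    rw [div_rpow pi_pos.le zero_le_two, div_mul_eq_mul_div, ← rpow_add pi_pos, add_sub_cancel,
      rpow_one]
    exact div_le_self pi_pos.le (one_le_rpow one_le_two hδ0)
  calc ∫ u in 0..π, |sin u| ^ (-δ)
      ≤ ∫ u in 0..π, (π / 2) ^ δ * (u ^ (-δ) + (π - u) ^ (-δ)) := by
        refine intervalIntegral.integral_mono_on_of_le_Ioo pi_pos.le
          (intervalIntegrable_abs_sin_rpow_neg hδ0 hδ1 0 π)
          (intervalIntegrable_sin_rpow_neg_majorant hδ1) fun u hu => ?_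
        rw [abs_of_pos (sin_pos_of_pos_of_lt_pi hu.1 hu.2)]
        exact sin_rpow_neg_le hδ0 hu
    _ = 2 * ((π / 2) ^ δ * π ^ (1 - δ)) / (1 - δ) := by
        rw [intervalIntegral.integral_const_mul, intervalIntegral.integral_add
          (intervalIntegral.intervalIntegrable_rpow' hs)
          (intervalIntegrable_sub_rpow hs π 0 π), hI, hI']
        ring
    _ ≤ 2 * π / (1 - δ) := by gcongr

theorem integral_abs_sin_sub_rpow_neg_le {δ : ℝ} (hδ0 : 0 ≤ δ) (hδ1 : δ < 1) (θ : ℝ) :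
    ∫ φ in 0..2 * π, |sin (φ - θ)| ^ (-δ) ≤ 4 * π / (1 - δ) := by
  have hperiodic := periodic_abs_sin_rpow (-δ)
  rw [intervalIntegral.integral_comp_sub_right (fun u => |sin u| ^ (-δ)), zero_sub,
    show 2 * π - θ = -θ + (2 : ℤ) • π by simp only [zsmul_eq_mul, Int.cast_two]; ring,
    hperiodic.intervalIntegral_add_zsmul_eq 2 (-θ) (intervalIntegrable_abs_sin_rpow_neg hδ0 hδ1),
    hperiodic.intervalIntegral_add_eq (-θ) 0, zero_add]
  calc (2 : ℤ) • ∫ u in 0..π, |sin u| ^ (-δ) ≤ 2 * (2 * π / (1 - δ)) := by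
        rw [zsmul_eq_mul, Int.cast_two]
        gcongr
        exact integral_abs_sin_rpow_neg_le hδ0 hδ1
    _ = 4 * π / (1 - δ) := by ring

theorem stmt_1 (c d : ℂ) (r δ : ℝ) (hr : 0 < r) (hδ : δ ∈ Set.Ioo (0:ℝ) 1) :
    (1 / (2 * Real.pi)) *
        ∫ φ in (0:ℝ)..(2 * Real.pi),
          logPlus ‖1 + c / ((r : ℂ) * Complex.exp (φ * Complex.I) - d)‖
      ≤ 2 * Real.pi * ‖c‖ ^ δ / (δ * (1 - δ) * r ^ δ) := by
  obtain ⟨hδ0, hδ1⟩ := hδ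
  set C := ‖c‖ ^ δ / δ * r ^ (-δ) with hC
  have hpointwise : ∀ᵐ φ : ℝ,
      logPlus ‖1 + c / ((r : ℂ) * Complex.exp (φ * Complex.I) - d)‖
        ≤ C * |sin (φ - d.arg)| ^ (-δ) := by
    filter_upwards [ae_sin_sub_ne_zero d.arg] with φ hφ
    have hm : 0 < r * |sin (φ - d.arg)| := by positivity
    calc _ ≤ ‖c‖ ^ δ / δ * (r * |sin (φ - d.arg)|) ^ (-δ) :=
          logPlus_norm_one_add_div_le hδ0 hδ1.le c _ hm
            (mul_abs_sin_sub_arg_le_norm_sub d hr.le φ)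
      _ = C * |sin (φ - d.arg)| ^ (-δ) := by rw [mul_rpow hr.le (abs_nonneg _), mul_assoc]
  have hmajorant :
      IntervalIntegrable (fun φ => C * |sin (φ - d.arg)| ^ (-δ)) volume 0 (2 * π) := by
    refine IntervalIntegrable.const_mul ?_ C
    simpa using (intervalIntegrable_abs_sin_rpow_neg hδ0.le hδ1 (0 - d.arg)
      (2 * π - d.arg)).comp_sub_right d.arg
  have hintegral : ∫ φ in (0:ℝ)..(2 * π),
      logPlus ‖1 + c / ((r : ℂ) * Complex.exp (φ * Complex.I) - d)‖
        ≤ C * (4 * π / (1 - δ)) := by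
    calc _ ≤ ∫ φ in (0:ℝ)..(2 * π), C * |sin (φ - d.arg)| ^ (-δ) :=
          intervalIntegral.integral_mono_of_nonneg (by positivity)
            (ae_of_all _ fun _ => logPlus_nonneg _) hmajorant hpointwise
      _ = C * ∫ φ in (0:ℝ)..(2 * π), |sin (φ - d.arg)| ^ (-δ) :=
          intervalIntegral.integral_const_mul _ _
      _ ≤ C * (4 * π / (1 - δ)) := by
          gcongr
          exact integral_abs_sin_sub_rpow_neg_le hδ0.le hδ1 d.arg
  have h1δ : 0 < 1 - δ := by linarith
  calc (1 / (2 * π)) * ∫ φ in (0:ℝ)..(2 * π),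
        logPlus ‖1 + c / ((r : ℂ) * Complex.exp (φ * Complex.I) - d)‖
      ≤ (1 / (2 * π)) * (C * (4 * π / (1 - δ))) := by gcongr
    _ = 2 * ‖c‖ ^ δ / (δ * (1 - δ) * r ^ δ) := by
        rw [hC, rpow_neg hr.le]
        field_simp
        ring
    _ ≤ 2 * π * ‖c‖ ^ δ / (δ * (1 - δ) * r ^ δ) := by
        gcongr
        linarith [pi_gt_three]
end

section
/- Let T: [r₀, ∞) → [e, ∞) be a nondecreasing continuous function and let ε̃ > 0. Define the exceptional set E := { r ≥ r₀ : T(r + r/(log T(r))^{1+ε̃}) > 2 T(r) }. Then E has finite logarithmic measure, i.e., ∫_E dr/r < ∞. -/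
/-!
Split the exceptional set `E` according to the level of `log T(r)`: on the piece where
`log T(r) ∈ [L, L + log 2)`, two points `r < r'` with `r' ≥ r (1 + L^{-p})` are impossible,
because monotonicity would give `T(r') ≥ T(r + r / (log T(r))^p) > 2 T(r)`, i.e.
`log T(r') > log T(r) + log 2`. So each piece lies in an interval `[a, a (1 + L^{-p})]`, of
logarithmic measure at most `L^{-p}`. The levels `L = 1 + n log 2` cover `E` since `T ≥ e`, and
`∑ (1 + n log 2)^{-p}` converges for `p = 1 + ε > 1`.
-/

open Real Set MeasureTheory

def exceptionalSet (T : ℝ → ℝ) (r₀ p : ℝ) : Set ℝ :=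
  {r | r₀ ≤ r ∧ 2 * T r < T (r + r / log (T r) ^ p)}

theorem setLIntegral_Icc_inv_le {a : ℝ} (ha : 0 < a) (δ : ℝ) :
    ∫⁻ r in Icc a (a * (1 + δ)), ENNReal.ofReal (1 / r) ≤ ENNReal.ofReal δ :=
  calc ∫⁻ r in Icc a (a * (1 + δ)), ENNReal.ofReal (1 / r)
      ≤ ∫⁻ _ in Icc a (a * (1 + δ)), ENNReal.ofReal (1 / a) :=
        setLIntegral_mono measurable_const fun r hr =>
          ENNReal.ofReal_le_ofReal (one_div_le_one_div_of_le ha hr.1)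
    _ = ENNReal.ofReal δ := by
        rw [setLIntegral_const, Real.volume_Icc, ← ENNReal.ofReal_mul (by positivity)]
        congr 1
        field_simp
        ring

theorem setLIntegral_inv_le_of_le_mul {S : Set ℝ} {δ : ℝ} (hδ : 0 ≤ δ) (hS : S ⊆ Ioi 0)
    (hspread : ∀ r ∈ S, ∀ r' ∈ S, r' ≤ r * (1 + δ)) :
    ∫⁻ r in S, ENNReal.ofReal (1 / r) ≤ ENNReal.ofReal δ := by
  rcases S.eq_empty_or_nonempty with rfl | ⟨s, hs⟩
  · simp
  have hδ' : 0 < 1 + δ := by linarith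
  have hlower : ∀ r' ∈ S, r' / (1 + δ) ≤ sInf S := fun r' hr' =>
    le_csInf ⟨s, hs⟩ fun r hr => (div_le_iff₀ hδ').2 (hspread r hr r' hr')
  have hpos : 0 < sInf S := (div_pos (hS hs) hδ').trans_le (hlower s hs)
  have hsub : S ⊆ Icc (sInf S) (sInf S * (1 + δ)) := fun r' hr' =>
    ⟨csInf_le ⟨0, fun r hr => (hS hr).le⟩ hr', (div_le_iff₀ hδ').1 (hlower r' hr')⟩
  exact (lintegral_mono_set hsub).trans (setLIntegral_Icc_inv_le hpos δ)

theorem lt_mul_of_mem_exceptionalSet {T : ℝ → ℝ} {r₀ p L r r' : ℝ}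
    (hmono : MonotoneOn T (Ici r₀)) (hp : 0 ≤ p) (hL : 0 < L)
    (hr : r ∈ exceptionalSet T r₀ p) (h0r : 0 ≤ r) (hTr : 0 < T r) (hLr : L ≤ log (T r))
    (hr' : r₀ ≤ r') (hLr' : log (T r') < L + log 2) :
    r' < r * (1 + 1 / L ^ p) := by
  by_contra! hfar
  have hstep : r / log (T r) ^ p ≤ r * (1 / L ^ p) := by
    rw [div_eq_mul_one_div]
    gcongr
  have hstep_nonneg : 0 ≤ r / log (T r) ^ p := by
    have : 0 < log (T r) := hL.trans_le hLr
    positivity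
  have hdouble : 2 * T r < T r' :=
    hr.2.trans_le <| hmono (by simp only [mem_Ici]; linarith [hr.1]) hr' (by linarith)
  have hlog : log 2 + log (T r) < log (T r') := by
    rw [← log_mul two_ne_zero hTr.ne']
    exact log_lt_log (by positivity) hdouble
  linarith

theorem setLIntegral_inv_exceptionalSet_inter_le {T : ℝ → ℝ} {r₀ p L : ℝ} (hr₀ : 0 < r₀)
    (hmono : MonotoneOn T (Ici r₀)) (hT : ∀ r, r₀ ≤ r → 0 < T r) (hp : 0 ≤ p) (hL : 0 < L) :
    ∫⁻ r in exceptionalSet T r₀ p ∩ (fun r => log (T r)) ⁻¹' Ico L (L + log 2),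
      ENNReal.ofReal (1 / r) ≤ ENNReal.ofReal (1 / L ^ p) := by
  refine setLIntegral_inv_le_of_le_mul (by positivity)
    (fun r hr => hr₀.trans_le hr.1.1) fun r hr r' hr' => ?_
  exact (lt_mul_of_mem_exceptionalSet hmono hp hL hr.1 (hr₀.le.trans hr.1.1)
    (hT r hr.1.1) hr.2.1 hr'.1.1 hr'.2.2).le

theorem exists_nat_mem_Ico_add_mul {a c x : ℝ} (hc : 0 < c) (hx : a ≤ x) :
    ∃ n : ℕ, x ∈ Ico (a + n * c) (a + n * c + c) := by
  refine ⟨⌊(x - a) / c⌋₊, ?_, ?_⟩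
  · have := Nat.floor_le (div_nonneg (sub_nonneg.2 hx) hc.le)
    rw [le_div_iff₀ hc] at this
    linarith
  · have := Nat.lt_floor_add_one ((x - a) / c)
    rw [div_lt_iff₀ hc] at this
    linarith

theorem summable_one_div_add_mul_rpow {a c p : ℝ} (ha : 0 < a) (hc : 0 < c) (hp : 1 < p) :
    Summable fun n : ℕ => 1 / (a + n * c) ^ p := by
  refine (((summable_one_div_nat_add_rpow (a / c) p).2 hp).mul_left (c ^ p)⁻¹).congr fun n => ?_
  have hn : 0 < (n : ℝ) + a / c := by positivity
  rw [abs_of_pos hn, show a + n * c = c * (n + a / c) by field_simp; ring,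
    mul_rpow hc.le hn.le]
  field_simp

theorem stmt_13_general (r₀ ε : ℝ) (hr₀ : 1 ≤ r₀) (hε : 0 < ε) (T : ℝ → ℝ)
    (hmono : MonotoneOn T (Set.Ici r₀))
    (hT : ∀ r, r₀ ≤ r → Real.exp 1 ≤ T r) :
    ∫⁻ r in {r : ℝ | r₀ ≤ r ∧
        2 * T r < T (r + r / Real.log (T r) ^ (1 + ε))},
      ENNReal.ofReal (1 / r) < ⊤ := by
  set E := exceptionalSet T r₀ (1 + ε)
  set L : ℕ → ℝ := fun n => 1 + n * log 2
  have hL : ∀ n, 0 < L n := fun n => by positivity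
  have hTpos : ∀ r, r₀ ≤ r → 0 < T r := fun r hr => (exp_pos 1).trans_le (hT r hr)
  have hcover : E ⊆ ⋃ n, E ∩ (fun r => log (T r)) ⁻¹' Ico (L n) (L n + log 2) := by
    intro r hr
    have h1 : 1 ≤ log (T r) := (le_log_iff_exp_le (hTpos r hr.1)).2 (hT r hr.1)
    obtain ⟨n, hn⟩ := exists_nat_mem_Ico_add_mul (log_pos one_lt_two) h1
    exact mem_iUnion.2 ⟨n, hr, hn⟩
  calc ∫⁻ r in E, ENNReal.ofReal (1 / r)
      ≤ ∫⁻ r in ⋃ n, E ∩ (fun r => log (T r)) ⁻¹' Ico (L n) (L n + log 2),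
          ENNReal.ofReal (1 / r) := lintegral_mono_set hcover
    _ ≤ ∑' n, ∫⁻ r in E ∩ (fun r => log (T r)) ⁻¹' Ico (L n) (L n + log 2),
          ENNReal.ofReal (1 / r) := lintegral_iUnion_le _ _
    _ ≤ ∑' n, ENNReal.ofReal (1 / L n ^ (1 + ε)) := ENNReal.tsum_le_tsum fun n =>
        setLIntegral_inv_exceptionalSet_inter_le (by linarith) hmono hTpos (by linarith) (hL n)
    _ < ⊤ := (summable_one_div_add_mul_rpow one_pos (log_pos one_lt_two)
        (by linarith)).tsum_ofReal_lt_top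

theorem stmt_13 (r₀ ε : ℝ) (hr₀ : 1 ≤ r₀) (hε : 0 < ε) (T : ℝ → ℝ)
    (hmono : MonotoneOn T (Set.Ici r₀)) (hcont : ContinuousOn T (Set.Ici r₀))
    (hT : ∀ r, r₀ ≤ r → Real.exp 1 ≤ T r) :
    ∫⁻ r in {r : ℝ | r₀ ≤ r ∧
        2 * T r < T (r + r / Real.log (T r) ^ (1 + ε))},
      ENNReal.ofReal (1 / r) < ⊤ :=
  stmt_13_general r₀ ε hr₀ hε T hmono hT
end
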